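/- arXiv:2201.11962 — 6 statements merged into one kernel-verified Lean document; each statement's English description precedes it below -/
import Mathlib

section
/- For every integrable real random variable C on a probability space, the map q ↦ scvar_q[C] is concave on the interval [0,1] and continuous on [0,1]. -/
/-!
A randomized test `Q` (measurable, `0 ≤ Q ≤ 1` a.s.) with `E[Q] = q` contributes the value
`E[C Q]` to the supremum defining `scvar_q[C]`. Mixing two tests mixes both `E[Q]` and `E[C Q]`
linearly, so `q ↦ scvar_q[C]` is concave, hence continuous on `(0, 1)`. At `q = 0` it is squeezed
between `q E[C]` and `E[(|C| - M)⁺] + M q`, whose first term is small for large `M` by dominated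
convergence. Replacing `Q` by `1 - Q` gives `scvar_q[C] = E[C] + scvar_{1-q}[-C]`, which turns
the endpoint `q = 1` into the endpoint `0`.
-/

open MeasureTheory

/-- Scaled conditional value-at-risk: supremum of `E[C·Q]` over measurable `Q` with
`0 ≤ Q ≤ 1` a.s. and `E[Q] = q`. -/
noncomputable def scvar {Ω : Type*} [MeasurableSpace Ω] (P : Measure Ω) (C : Ω → ℝ) (q : ℝ) : ℝ :=
  sSup {y : ℝ | ∃ Q : Ω → ℝ, Measurable Q ∧ (∀ᵐ ω ∂P, 0 ≤ Q ω ∧ Q ω ≤ 1) ∧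
    (∫ ω, Q ω ∂P) = q ∧ y = ∫ ω, C ω * Q ω ∂P}

open Filter Set Topology

theorem ConcaveOn.continuousOn_Icc_of_continuousWithinAt {f : ℝ → ℝ} {a b : ℝ}
    (hf : ConcaveOn ℝ (Icc a b) f) (ha : ContinuousWithinAt f (Icc a b) a)
    (hb : ContinuousWithinAt f (Icc a b) b) : ContinuousOn f (Icc a b) := by
  intro x hx
  rcases hx.1.eq_or_lt with rfl | hax
  · exact ha
  rcases hx.2.eq_or_lt with rfl | hxb
  · exact hb
  have hint := hf.continuousOn_interior
  rw [interior_Icc] at hint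
  exact ((hint x ⟨hax, hxb⟩).continuousAt (Ioo_mem_nhds hax hxb)).continuousWithinAt

lemma mul_le_max_abs_sub_add {c q : ℝ} (hq : q ∈ Icc (0 : ℝ) 1) (M : ℝ) :
    c * q ≤ max (|c| - M) 0 + M * q := by
  have habs : c * q ≤ |c| * q := mul_le_mul_of_nonneg_right (le_abs_self c) hq.1
  have htail : (|c| - M) * q ≤ max (|c| - M) 0 :=
    calc (|c| - M) * q ≤ max (|c| - M) 0 * q :=
          mul_le_mul_of_nonneg_right (le_max_left _ _) hq.1
      _ ≤ max (|c| - M) 0 := mul_le_of_le_one_right (le_max_right _ _) hq.2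
  linarith

theorem tendsto_integral_max_abs_sub_atTop {Ω : Type*} [MeasurableSpace Ω] {μ : Measure Ω}
    {C : Ω → ℝ} (hC : Integrable C μ) :
    Tendsto (fun M : ℝ => ∫ ω, max (|C ω| - M) 0 ∂μ) atTop (𝓝 0) := by
  have hmeas : ∀ M : ℝ, AEStronglyMeasurable (fun ω => max (|C ω| - M) 0) μ := fun M => by
    have := hC.aestronglyMeasurable
    fun_prop
  have hbound : ∀ᶠ M : ℝ in atTop, ∀ᵐ ω ∂μ, ‖max (|C ω| - M) 0‖ ≤ |C ω| := by
    filter_upwards [eventually_ge_atTop 0] with M hM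
    refine ae_of_all _ fun ω => ?_
    rw [Real.norm_of_nonneg (le_max_right _ _)]
    exact max_le (by linarith) (abs_nonneg _)
  have hlim : ∀ᵐ ω ∂μ, Tendsto (fun M : ℝ => max (|C ω| - M) 0) atTop (𝓝 0) :=
    ae_of_all _ fun ω => tendsto_const_nhds.congr' <| by
      filter_upwards [eventually_ge_atTop |C ω|] with M hM
      exact (max_eq_right (by linarith)).symm
  simpa using tendsto_integral_filter_of_dominated_convergence _
    (Eventually.of_forall hmeas) hbound hC.abs hlim

section

variable {Ω : Type*} [MeasurableSpace Ω] {P : Measure Ω} {C Q : Ω → ℝ} {q : ℝ}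

def IsRandomizedTest (P : Measure Ω) (Q : Ω → ℝ) : Prop :=
  Measurable Q ∧ ∀ᵐ ω ∂P, Q ω ∈ Icc (0 : ℝ) 1

namespace IsRandomizedTest

lemma const (hq : q ∈ Icc (0 : ℝ) 1) : IsRandomizedTest P fun _ => q :=
  ⟨measurable_const, ae_of_all _ fun _ => hq⟩

lemma one_sub (hQ : IsRandomizedTest P Q) : IsRandomizedTest P fun ω => 1 - Q ω :=
  ⟨measurable_const.sub hQ.1, hQ.2.mono fun _ h => ⟨by linarith [h.2], by linarith [h.1]⟩⟩

lemma integrable [IsFiniteMeasure P] (hQ : IsRandomizedTest P Q) : Integrable Q P :=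
  .of_bound hQ.1.aestronglyMeasurable 1 <| hQ.2.mono fun _ h => by
    rw [Real.norm_of_nonneg h.1]; exact h.2

lemma integrable_mul (hC : Integrable C P) (hQ : IsRandomizedTest P Q) :
    Integrable (fun ω => C ω * Q ω) P :=
  hC.mul_bdd hQ.1.aestronglyMeasurable <| hQ.2.mono fun _ h => by
    rw [Real.norm_of_nonneg h.1]; exact h.2

end IsRandomizedTest

lemma convex_setOf_isRandomizedTest : Convex ℝ {Q : Ω → ℝ | IsRandomizedTest P Q} := by
  intro Q₁ hQ₁ Q₂ hQ₂ a b ha hb hab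
  refine ⟨(hQ₁.1.const_smul a).add (hQ₂.1.const_smul b), ?_⟩
  filter_upwards [hQ₁.2, hQ₂.2] with ω h₁ h₂
  exact convex_Icc 0 1 h₁ h₂ ha hb hab

lemma scvar_eq_sSup_image (P : Measure Ω) (C : Ω → ℝ) (q : ℝ) :
    scvar P C q = sSup ((fun Q => ∫ ω, C ω * Q ω ∂P) ''
      {Q | IsRandomizedTest P Q ∧ ∫ ω, Q ω ∂P = q}) := by
  simp only [scvar, image, IsRandomizedTest, mem_Icc, mem_ofPred_eq, and_assoc, eq_comm]

lemma integral_mul_le_scvar (hC : Integrable C P) (hQ : IsRandomizedTest P Q) :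
    ∫ ω, C ω * Q ω ∂P ≤ scvar P C (∫ ω, Q ω ∂P) := by
  rw [scvar_eq_sSup_image]
  refine le_csSup ⟨∫ ω, |C ω| ∂P, forall_mem_image.2 fun Q' hQ' => ?_⟩
    (mem_image_of_mem _ ⟨hQ, rfl⟩)
  refine integral_mono_ae (hQ'.1.integrable_mul hC) hC.abs (hQ'.1.2.mono fun ω h => ?_)
  simpa using mul_le_max_abs_sub_add (c := C ω) h 0

variable [IsProbabilityMeasure P]

lemma nonempty_setOf_isRandomizedTest_integral_eq (hq : q ∈ Icc (0 : ℝ) 1) :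
    {Q : Ω → ℝ | IsRandomizedTest P Q ∧ ∫ ω, Q ω ∂P = q}.Nonempty :=
  ⟨fun _ => q, .const hq, by simp⟩

lemma scvar_le_of_forall (hq : q ∈ Icc (0 : ℝ) 1) {b : ℝ}
    (h : ∀ Q, IsRandomizedTest P Q → ∫ ω, Q ω ∂P = q → ∫ ω, C ω * Q ω ∂P ≤ b) :
    scvar P C q ≤ b := by
  rw [scvar_eq_sSup_image]
  exact csSup_le ((nonempty_setOf_isRandomizedTest_integral_eq hq).image _)
    (forall_mem_image.2 fun Q hQ => h Q hQ.1 hQ.2)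

lemma exists_lt_integral_mul_of_lt_scvar (hq : q ∈ Icc (0 : ℝ) 1) {y : ℝ}
    (hy : y < scvar P C q) :
    ∃ Q, IsRandomizedTest P Q ∧ ∫ ω, Q ω ∂P = q ∧ y < ∫ ω, C ω * Q ω ∂P := by
  rw [scvar_eq_sSup_image] at hy
  obtain ⟨_, ⟨Q, ⟨hQ, hQq⟩, rfl⟩, hlt⟩ :=
    exists_lt_of_lt_csSup ((nonempty_setOf_isRandomizedTest_integral_eq hq).image _) hy
  exact ⟨Q, hQ, hQq, hlt⟩

lemma integral_mul_const_le_scvar (hC : Integrable C P) (hq : q ∈ Icc (0 : ℝ) 1) :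
    (∫ ω, C ω ∂P) * q ≤ scvar P C q := by
  simpa [integral_mul_const] using integral_mul_le_scvar hC (IsRandomizedTest.const (P := P) hq)

lemma scvar_le_integral_max_abs_sub_add (hC : Integrable C P) (hq : q ∈ Icc (0 : ℝ) 1) (M : ℝ) :
    scvar P C q ≤ ∫ ω, max (|C ω| - M) 0 ∂P + M * q := by
  refine scvar_le_of_forall hq fun Q hQ hQq => ?_
  have htail : Integrable (fun ω => max (|C ω| - M) 0) P :=
    (hC.abs.sub (integrable_const M)).pos_part
  calc ∫ ω, C ω * Q ω ∂P ≤ ∫ ω, (max (|C ω| - M) 0 + M * Q ω) ∂P :=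
        integral_mono_ae (hQ.integrable_mul hC) (htail.add (hQ.integrable.const_mul M))
          (hQ.2.mono fun ω h => mul_le_max_abs_sub_add h M)
    _ = ∫ ω, max (|C ω| - M) 0 ∂P + M * q := by
        rw [integral_add htail (hQ.integrable.const_mul M), integral_const_mul, hQq]

lemma scvar_zero (hC : Integrable C P) : scvar P C 0 = 0 := by
  refine le_antisymm ?_ (by simpa using integral_mul_const_le_scvar hC (q := 0) (by simp))
  refine ge_of_tendsto' (tendsto_integral_max_abs_sub_atTop hC) fun M => ?_
  simpa using scvar_le_integral_max_abs_sub_add hC (q := 0) (by simp) M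

lemma scvar_le_integral_add_scvar_neg (hC : Integrable C P) (hq : q ∈ Icc (0 : ℝ) 1) :
    scvar P C q ≤ ∫ ω, C ω ∂P + scvar P (-C) (1 - q) := by
  refine scvar_le_of_forall hq fun Q hQ hQq => ?_
  have h := integral_mul_le_scvar hC.neg hQ.one_sub
  have hsplit : ∫ ω, (-C) ω * (1 - Q ω) ∂P = ∫ ω, C ω * Q ω ∂P - ∫ ω, C ω ∂P := by
    rw [← integral_sub (hQ.integrable_mul hC) hC]
    congr 1 with ω
    simp only [Pi.neg_apply]
    ring
  rw [hsplit, integral_sub (integrable_const 1) hQ.integrable, hQq] at h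
  simp only [integral_const, probReal_univ, smul_eq_mul, mul_one, tsub_le_iff_right] at h
  linarith

lemma scvar_eq_integral_add_scvar_neg (hC : Integrable C P) (hq : q ∈ Icc (0 : ℝ) 1) :
    scvar P C q = ∫ ω, C ω ∂P + scvar P (-C) (1 - q) := by
  have hq' : 1 - q ∈ Icc (0 : ℝ) 1 := ⟨by linarith [hq.2], by linarith [hq.1]⟩
  have h := scvar_le_integral_add_scvar_neg hC.neg hq'
  simp only [neg_neg, sub_sub_cancel, Pi.neg_apply, integral_neg] at h
  linarith [scvar_le_integral_add_scvar_neg hC hq]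

theorem concaveOn_scvar (hC : Integrable C P) : ConcaveOn ℝ (Icc 0 1) (scvar P C) := by
  refine ⟨convex_Icc 0 1, fun x hx y hy a b ha hb hab =>
    le_of_forall_pos_le_add fun ε hε => ?_⟩
  obtain ⟨Q₁, hQ₁, hQ₁x, h₁⟩ :=
    exists_lt_integral_mul_of_lt_scvar (P := P) (C := C) hx (sub_lt_self _ hε)
  obtain ⟨Q₂, hQ₂, hQ₂y, h₂⟩ :=
    exists_lt_integral_mul_of_lt_scvar (P := P) (C := C) hy (sub_lt_self _ hε)
  have hQ : IsRandomizedTest P (a • Q₁ + b • Q₂) :=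
    convex_setOf_isRandomizedTest hQ₁ hQ₂ ha hb hab
  have hmean : ∫ ω, (a • Q₁ + b • Q₂) ω ∂P = a * x + b * y := by
    simp only [Pi.add_apply, Pi.smul_apply, smul_eq_mul]
    rw [integral_add (hQ₁.integrable.const_mul a) (hQ₂.integrable.const_mul b),
      integral_const_mul, integral_const_mul, hQ₁x, hQ₂y]
  have hvalue : ∫ ω, C ω * (a • Q₁ + b • Q₂) ω ∂P
      = a * ∫ ω, C ω * Q₁ ω ∂P + b * ∫ ω, C ω * Q₂ ω ∂P := by
    rw [← integral_const_mul, ← integral_const_mul, ← integral_add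
      ((hQ₁.integrable_mul hC).const_mul a) ((hQ₂.integrable_mul hC).const_mul b)]
    congr 1 with ω
    simp only [Pi.add_apply, Pi.smul_apply, smul_eq_mul]
    ring
  have hmix := integral_mul_le_scvar hC hQ
  rw [hmean, hvalue] at hmix
  have hε_split : a * ε + b * ε = ε := by rw [← add_mul, hab, one_mul]
  simp only [smul_eq_mul]
  linarith [mul_le_mul_of_nonneg_left h₁.le ha, mul_le_mul_of_nonneg_left h₂.le hb]

theorem continuousWithinAt_scvar_zero (hC : Integrable C P) :
    ContinuousWithinAt (scvar P C) (Icc 0 1) 0 := by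
  rw [ContinuousWithinAt, scvar_zero hC]
  refine tendsto_order.2 ⟨fun a ha => ?_, fun b hb => ?_⟩
  · have hlim : Tendsto (fun q => (∫ ω, C ω ∂P) * q) (𝓝[Icc 0 1] 0) (𝓝 0) :=
      ((continuous_const_mul _).tendsto' 0 0 (mul_zero _)).mono_left nhdsWithin_le_nhds
    filter_upwards [hlim.eventually_const_lt ha, self_mem_nhdsWithin] with q hq hqI
    exact hq.trans_le (integral_mul_const_le_scvar hC hqI)
  · obtain ⟨M, hM⟩ := ((tendsto_integral_max_abs_sub_atTop hC).eventually_lt_const hb).exists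
    have hlim : Tendsto (fun q => ∫ ω, max (|C ω| - M) 0 ∂P + M * q) (𝓝[Icc 0 1] 0)
        (𝓝 (∫ ω, max (|C ω| - M) 0 ∂P)) :=
      ((continuous_const.add (continuous_const_mul M)).tendsto' 0 _ (by simp)).mono_left
        nhdsWithin_le_nhds
    filter_upwards [hlim.eventually_lt_const hM, self_mem_nhdsWithin] with q hq hqI
    exact (scvar_le_integral_max_abs_sub_add hC hqI M).trans_lt hq

theorem continuousWithinAt_scvar_one (hC : Integrable C P) :
    ContinuousWithinAt (scvar P C) (Icc 0 1) 1 := by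
  have hreflect :
      ContinuousWithinAt (fun q => ∫ ω, C ω ∂P + scvar P (-C) (1 - q)) (Icc 0 1) 1 :=
    continuousWithinAt_const.add <| (continuousWithinAt_scvar_zero hC.neg).comp_of_eq
      (continuous_const.sub continuous_id).continuousWithinAt
      (fun q hq => ⟨by linarith [hq.2], by linarith [hq.1]⟩) (sub_self 1)
  exact hreflect.congr (fun q hq => scvar_eq_integral_add_scvar_neg hC hq)
    (scvar_eq_integral_add_scvar_neg hC (right_mem_Icc.2 zero_le_one))

end

/-- The map `q ↦ scvar_q[C]` is concave and continuous on `[0,1]`. -/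
theorem scvar_concaveOn_continuousOn {Ω : Type*} [MeasurableSpace Ω] (P : Measure Ω)
    [IsProbabilityMeasure P] (C : Ω → ℝ) (hC : Integrable C P) :
    ConcaveOn ℝ (Set.Icc (0 : ℝ) 1) (fun q => scvar P C q) ∧
    ContinuousOn (fun q => scvar P C q) (Set.Icc (0 : ℝ) 1) :=
  ⟨concaveOn_scvar hC, (concaveOn_scvar hC).continuousOn_Icc_of_continuousWithinAt
    (continuousWithinAt_scvar_zero hC) (continuousWithinAt_scvar_one hC)⟩
end

section
/- Let C be an integrable real random variable on a probability space whose law has no atoms, let q ∈ (0,1), and let c ∈ ℝ satisfy P(C ≥ c) = q. Then scvar_q[C] = E[C · 1{C ≥ c}], i.e., the scaled conditional value-at-risk equals the truncated average of C beyond its (1−q)-quantile. -/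
/-!
The indicator `I` of the superlevel set `{C ≥ c}` dominates every other test function `Q`
with `0 ≤ Q ≤ 1` and the same mass: `(C - c) (I - Q) ≥ 0` pointwise, since `I - Q ≥ 0` where
`C ≥ c` and `I - Q ≤ 0` where `C < c`. Integrating, the terms in `c` cancel because
`E[I] = E[Q]`, so `E[C Q] ≤ E[C I]`; and `I` itself is admissible, so the supremum is attained
at `I`.
-/

open MeasureTheory

lemma sub_mul_indicator_le_sub_nonneg {Ω : Type*} (C : Ω → ℝ) (c : ℝ) {Q : Ω → ℝ} {ω : Ω}
    (hQ : 0 ≤ Q ω ∧ Q ω ≤ 1) :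
    0 ≤ (C ω - c) * ({ω | c ≤ C ω}.indicator 1 ω - Q ω) := by
  by_cases h : c ≤ C ω
  · have hI : {ω | c ≤ C ω}.indicator (1 : Ω → ℝ) ω = 1 :=
      Set.indicator_of_mem (s := {ω | c ≤ C ω}) h _
    rw [hI]
    exact mul_nonneg (sub_nonneg.mpr h) (sub_nonneg.mpr hQ.2)
  · have hI : {ω | c ≤ C ω}.indicator (1 : Ω → ℝ) ω = 0 :=
      Set.indicator_of_notMem (s := {ω | c ≤ C ω}) h _
    rw [hI]
    exact mul_nonneg_of_nonpos_of_nonpos (by linarith [not_le.mp h]) (by linarith [hQ.1])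

lemma integral_mul_le_integral_mul_indicator_le {Ω : Type*} [MeasurableSpace Ω] {P : Measure Ω}
    [IsFiniteMeasure P] {C Q : Ω → ℝ}
    (hC : Integrable C P) (hCm : Measurable C) (hQm : AEStronglyMeasurable Q P)
    (hQ : ∀ᵐ ω ∂P, 0 ≤ Q ω ∧ Q ω ≤ 1) {c : ℝ}
    (hQc : ∫ ω, Q ω ∂P = P.real {ω | c ≤ C ω}) :
    ∫ ω, C ω * Q ω ∂P ≤ ∫ ω, C ω * {ω | c ≤ C ω}.indicator 1 ω ∂P := by
  set I : Ω → ℝ := {ω | c ≤ C ω}.indicator 1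
  have hA : MeasurableSet {ω | c ≤ C ω} := measurableSet_le measurable_const hCm
  have hQ_norm : ∀ᵐ ω ∂P, ‖Q ω‖ ≤ 1 := hQ.mono fun ω h => by simpa [abs_of_nonneg h.1] using h.2
  have hI_norm : ∀ᵐ ω ∂P, ‖I ω‖ ≤ 1 :=
    Filter.Eventually.of_forall fun ω => by by_cases h : c ≤ C ω <;> simp [I, h]
  have hQint : Integrable Q P := (integrable_const (1 : ℝ)).mono' hQm hQ_norm
  have hIint : Integrable I P := (integrable_const (1 : ℝ)).indicator hA
  have hCQint : Integrable (fun ω => C ω * Q ω) P := hC.mul_bdd hQm hQ_norm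
  have hCIint : Integrable (fun ω => C ω * I ω) P :=
    hC.mul_bdd hIint.aestronglyMeasurable hI_norm
  have hIQ : ∫ ω, (I ω - Q ω) ∂P = 0 := by
    rw [integral_sub hIint hQint, integral_indicator_one hA, hQc, sub_self]
  have hnonneg : 0 ≤ ∫ ω, (C ω - c) * (I ω - Q ω) ∂P :=
    integral_nonneg_of_ae (hQ.mono fun ω h => sub_mul_indicator_le_sub_nonneg C c h)
  have hexpand : ∫ ω, (C ω - c) * (I ω - Q ω) ∂P
      = ∫ ω, C ω * I ω ∂P - ∫ ω, C ω * Q ω ∂P := by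
    have hsplit : (fun ω => (C ω - c) * (I ω - Q ω))
        = fun ω => (C ω * I ω - C ω * Q ω) - c * (I ω - Q ω) := by
      funext ω; ring
    have hint : Integrable (fun ω => c * (I ω - Q ω)) P := (hIint.sub hQint).const_mul c
    have hdiff : Integrable (fun ω => C ω * I ω - C ω * Q ω) P := hCIint.sub hCQint
    rw [hsplit, integral_sub hdiff hint, integral_const_mul, hIQ, mul_zero, sub_zero,
      integral_sub hCIint hCQint]
  linarith

theorem scvar_eq_truncated_average_general {Ω : Type*} [MeasurableSpace Ω] (P : Measure Ω)
    [IsProbabilityMeasure P] (C : Ω → ℝ) (hC : Integrable C P) (hCm : Measurable C)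
    {q : ℝ} (hq : q ∈ Set.Ioo (0 : ℝ) 1) {c : ℝ}
    (hc : P {ω | c ≤ C ω} = ENNReal.ofReal q) :
    scvar P C q = ∫ ω, C ω * Set.indicator {ω | c ≤ C ω} (fun _ => (1 : ℝ)) ω ∂P := by
  have hA : MeasurableSet {ω | c ≤ C ω} := measurableSet_le measurable_const hCm
  have hPA : P.real {ω | c ≤ C ω} = q := by
    rw [measureReal_def, hc, ENNReal.toReal_ofReal hq.1.le]
  refine IsGreatest.csSup_eq ⟨⟨_, measurable_const.indicator hA, ?_, ?_, rfl⟩, ?_⟩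
  · refine Filter.Eventually.of_forall fun ω => ?_
    by_cases h : c ≤ C ω <;> simp [Set.indicator, h]
  · exact (integral_indicator_one hA).trans hPA
  · rintro y ⟨Q, hQm, hQ, hQq, rfl⟩
    exact integral_mul_le_integral_mul_indicator_le hC hCm hQm.aestronglyMeasurable hQ
      (hQq.trans hPA.symm)

/-- If the law of `C` has no atoms, `q ∈ (0,1)` and `c` is such that `P(C ≥ c) = q`, then
`scvar_q[C] = E[C · 1{C ≥ c}]`, the truncated average of `C` beyond its `(1-q)`-quantile. -/
theorem scvar_eq_truncated_average {Ω : Type*} [MeasurableSpace Ω] (P : Measure Ω)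
    [IsProbabilityMeasure P] (C : Ω → ℝ) (hC : Integrable C P) (hCm : Measurable C)
    (hatomless : ∀ c : ℝ, P {ω | C ω = c} = 0)
    {q : ℝ} (hq : q ∈ Set.Ioo (0 : ℝ) 1) {c : ℝ}
    (hc : P {ω | c ≤ C ω} = ENNReal.ofReal q) :
    scvar P C q = ∫ ω, C ω * Set.indicator {ω | c ≤ C ω} (fun _ => (1 : ℝ)) ω ∂P :=
  scvar_eq_truncated_average_general P C hC hCm hq hc
end

section
/- For every integrable real random variable C on a probability space and every q ∈ [0,1], the supremum defining scvar_q[C] is attained: there exists a measurable Q : Ω → ℝ with 0 ≤ Q ≤ 1 almost surely and E[Q] = q such that E[C·Q] = scvar_q[C] (equivalently, E[C·Q'] ≤ E[C·Q] for every measurable Q' with 0 ≤ Q' ≤ 1 a.s. and E[Q'] = q). -/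
/-!
Neyman–Pearson, or "bathtub", argument. Choose a threshold `t` with
`P(C > t) ≤ q ≤ P(C ≥ t)` (a quantile of `C`) and let `Q` be `1` on `{C > t}`, `0` on `{C < t}`
and the constant on `{C = t}` that makes `E[Q] = q`. For any admissible `Q'` one has
`(C - t)(Q' - Q) ≤ 0` pointwise, and integrating gives `E[C Q'] - E[C Q] ≤ t (E[Q'] - E[Q]) = 0`.
For `q = 0` and `q = 1` the admissible `Q` are a.e. constant, so every one of them is optimal.
-/

open MeasureTheory Filter Set Topology
open scoped ENNReal

theorem tendsto_measure_Ici_atTop_zero (μ : Measure ℝ) [IsFiniteMeasure μ] :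
    Tendsto (fun s => μ (Ici s)) atTop (𝓝 0) := by
  have hempty : ⋂ s : ℝ, Ici s = ∅ :=
    eq_empty_of_forall_notMem fun x hx => (lt_add_one x).not_ge (mem_iInter.1 hx (x + 1))
  simpa [Function.comp_def, hempty] using tendsto_measure_iInter_atTop (μ := μ)
    (fun _ => measurableSet_Ici.nullMeasurableSet) antitone_Ici ⟨0, measure_ne_top μ _⟩

theorem exists_measure_Ioi_le_le_measure_Ici {μ : Measure ℝ} [IsFiniteMeasure μ] {r : ℝ≥0∞}
    (hr₀ : 0 < r) (hr : r < μ univ) : ∃ t, μ (Ioi t) ≤ r ∧ r ≤ μ (Ici t) := by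
  set T := {s : ℝ | r ≤ μ (Ici s)}
  have hT_lower : ∀ {s s'}, s' ≤ s → s ∈ T → s' ∈ T := fun h hs =>
    hs.trans (measure_mono (Ici_subset_Ici.2 h))
  have hT_ne : T.Nonempty :=
    (((tendsto_measure_Ici_atBot μ).eventually (lt_mem_nhds hr)).exists).imp fun _ h => h.le
  have hT_bdd : BddAbove T := by
    obtain ⟨b, hb⟩ := ((tendsto_measure_Ici_atTop_zero μ).eventually (gt_mem_nhds hr₀)).exists
    exact ⟨b, fun s hs => le_of_not_gt fun hbs => (hT_lower hbs.le hs).not_gt hb⟩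
  refine ⟨sSup T, ?_, ?_⟩
  · obtain ⟨v, hv_anti, hv_gt, hv⟩ := exists_seq_strictAnti_tendsto (sSup T)
    have hmono : Monotone fun n => Ici (v n) := fun _ _ hmn =>
      Ici_subset_Ici.2 (hv_anti.antitone hmn)
    rw [← iUnion_Ici_eq_Ioi_of_lt_of_tendsto hv_gt hv, hmono.measure_iUnion]
    exact iSup_le fun n => (not_le.1 fun h => (hv_gt n).not_ge (le_csSup hT_bdd h)).le
  · obtain ⟨u, hu_mono, hu_lt, hu⟩ := exists_seq_strictMono_tendsto (sSup T)
    have hIci : Ici (sSup T) = ⋂ n, Ici (u n) := by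
      refine Subset.antisymm (subset_iInter fun n => Ici_subset_Ici.2 (hu_lt n).le) fun x hx => ?_
      exact le_of_tendsto' hu fun n => mem_iInter.1 hx n
    have hanti : Antitone fun n => Ici (u n) := fun _ _ hmn =>
      Ici_subset_Ici.2 (hu_mono.monotone hmn)
    rw [hIci, hanti.measure_iInter (fun _ => measurableSet_Ici.nullMeasurableSet)
      ⟨0, measure_ne_top μ _⟩]
    refine le_iInf fun n => ?_
    obtain ⟨s, hs, hus⟩ := exists_lt_of_lt_csSup hT_ne (hu_lt n)
    exact hT_lower hus.le hs

section RiskEnvelope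

variable {Ω : Type*} [MeasurableSpace Ω] {P : Measure Ω} {C Q : Ω → ℝ} {q t : ℝ}

theorem exists_measureReal_gt_le_le_measureReal_ge [IsProbabilityMeasure P] (hC : Measurable C)
    (hq₀ : 0 < q) (hq₁ : q < 1) :
    ∃ t, P.real {ω | t < C ω} ≤ q ∧ q ≤ P.real {ω | t ≤ C ω} := by
  obtain ⟨t, hlo, hhi⟩ := exists_measure_Ioi_le_le_measure_Ici (μ := P.map C)
    (ENNReal.ofReal_pos.2 hq₀) (by simpa [Measure.map_apply hC MeasurableSet.univ] using hq₁)
  rw [Measure.map_apply hC measurableSet_Ioi] at hlo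
  rw [Measure.map_apply hC measurableSet_Ici] at hhi
  exact ⟨t, ENNReal.toReal_le_of_le_ofReal hq₀.le hlo,
    (ENNReal.ofReal_le_iff_le_toReal (measure_ne_top _ _)).1 hhi⟩

def riskEnvelope (P : Measure Ω) (q : ℝ) : Set (Ω → ℝ) :=
  {Q | Measurable Q ∧ (∀ᵐ ω ∂P, 0 ≤ Q ω ∧ Q ω ≤ 1) ∧ ∫ ω, Q ω ∂P = q}

theorem ae_norm_le_one_of_mem_riskEnvelope (hQ : Q ∈ riskEnvelope P q) :
    ∀ᵐ ω ∂P, ‖Q ω‖ ≤ 1 := by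
  filter_upwards [hQ.2.1] with ω h
  exact abs_le.2 ⟨by linarith [h.1], h.2⟩

theorem integrable_of_mem_riskEnvelope [IsFiniteMeasure P] (hQ : Q ∈ riskEnvelope P q) :
    Integrable Q P :=
  .of_bound hQ.1.aestronglyMeasurable 1 (ae_norm_le_one_of_mem_riskEnvelope hQ)

theorem integrable_mul_of_mem_riskEnvelope (hC : Integrable C P) (hQ : Q ∈ riskEnvelope P q) :
    Integrable (fun ω => C ω * Q ω) P :=
  hC.mul_bdd hQ.1.aestronglyMeasurable (ae_norm_le_one_of_mem_riskEnvelope hQ)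

theorem isMaxOn_riskEnvelope_of_threshold [IsFiniteMeasure P] (hC : Integrable C P)
    (hQ : Q ∈ riskEnvelope P q) (hthr : ∀ᵐ ω ∂P, (t < C ω → Q ω = 1) ∧ (C ω < t → Q ω = 0)) :
    IsMaxOn (fun Q => ∫ ω, C ω * Q ω ∂P) (riskEnvelope P q) Q := by
  refine isMaxOn_iff.2 fun Q' hQ' => ?_
  have hpt : ∀ᵐ ω ∂P, (C ω - t) * (Q' ω - Q ω) ≤ 0 := by
    filter_upwards [hQ'.2.1, hthr] with ω ⟨h0, h1⟩ ⟨hhi, hlo⟩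
    rcases lt_trichotomy (C ω) t with h | h | h
    · rw [hlo h]; nlinarith
    · simp [h]
    · rw [hhi h]; nlinarith
  have hCQ := integrable_mul_of_mem_riskEnvelope hC hQ
  have hCQ' := integrable_mul_of_mem_riskEnvelope hC hQ'
  have hsplit : ∫ ω, (C ω - t) * (Q' ω - Q ω) ∂P
      = (∫ ω, C ω * Q' ω ∂P - ∫ ω, C ω * Q ω ∂P) - t * (∫ ω, Q' ω ∂P - ∫ ω, Q ω ∂P) := by
    have hQi := integrable_of_mem_riskEnvelope hQ
    have hQ'i := integrable_of_mem_riskEnvelope hQ'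
    calc ∫ ω, (C ω - t) * (Q' ω - Q ω) ∂P
        = ∫ ω, (C ω * Q' ω - C ω * Q ω) - t * (Q' ω - Q ω) ∂P := by
          congr 1; ext ω; ring
      _ = _ := by
          have hdiff : Integrable (fun ω => C ω * Q' ω - C ω * Q ω) P := hCQ'.sub hCQ
          have hmass : Integrable (fun ω => t * (Q' ω - Q ω)) P := (hQ'i.sub hQi).const_mul t
          rw [integral_sub hdiff hmass, integral_sub hCQ' hCQ,
            integral_const_mul, integral_sub hQ'i hQi]
  have hle := integral_nonpos_of_ae hpt
  rw [hsplit, hQ.2.2, hQ'.2.2, sub_self, mul_zero, sub_zero, sub_nonpos] at hle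
  exact hle

theorem exists_mem_riskEnvelope_of_threshold [IsFiniteMeasure P] (hC : Measurable C)
    (hlo : P.real {ω | t < C ω} ≤ q) (hhi : q ≤ P.real {ω | t ≤ C ω}) :
    ∃ Q ∈ riskEnvelope P q, ∀ ω, (t < C ω → Q ω = 1) ∧ (C ω < t → Q ω = 0) := by
  set A := {ω | t < C ω}
  set B := {ω | C ω = t}
  have hA : MeasurableSet A := measurableSet_lt measurable_const hC
  have hB : MeasurableSet B := hC (measurableSet_singleton t)
  have hdisj : Disjoint A B := disjoint_left.2 fun ω hA hB => hA.ne' hB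
  have hAB : P.real {ω | t ≤ C ω} = P.real A + P.real B := by
    rw [← measureReal_union hdisj hB]
    congr 1; ext ω; simp [A, B, le_iff_lt_or_eq, eq_comm]
  -- if `P.real B = 0` then `q = P.real A`, and the junk value `θ = 0` still works
  set θ := (q - P.real A) / P.real B
  have hθ : θ * P.real B = q - P.real A :=
    div_mul_cancel_of_imp fun h => by linarith
  have hθ0 : 0 ≤ θ := div_nonneg (by linarith) measureReal_nonneg
  have hθ1 : θ ≤ 1 := div_le_one_of_le₀ (by linarith) measureReal_nonneg
  refine ⟨A.indicator (fun _ => 1) + B.indicator fun _ => θ, ⟨?_, ?_, ?_⟩,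
    fun ω => ⟨fun h => ?_, fun h => ?_⟩⟩
  · exact (measurable_const.indicator hA).add (measurable_const.indicator hB)
  · refine ae_of_all _ fun ω => ?_
    by_cases h1 : ω ∈ A
    · simp [h1, hdisj.notMem_of_mem_left h1]
    · by_cases h2 : ω ∈ B <;> simp [h1, h2, hθ0, hθ1]
  · simp only [Pi.add_apply]
    rw [integral_add ((integrable_const 1).indicator hA) ((integrable_const θ).indicator hB),
      integral_indicator_const _ hA, integral_indicator_const _ hB]
    simp only [smul_eq_mul, mul_one]
    linarith
  · simp [A, B, h, h.ne']
  · simp [A, B, h.not_gt, h.ne]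

theorem ae_eq_zero_of_mem_riskEnvelope_zero [IsFiniteMeasure P] (hQ : Q ∈ riskEnvelope P 0) :
    Q =ᵐ[P] 0 :=
  (integral_eq_zero_iff_of_nonneg_ae (hQ.2.1.mono fun _ h => h.1)
    (integrable_of_mem_riskEnvelope hQ)).1 hQ.2.2

theorem ae_eq_one_of_mem_riskEnvelope_one [IsProbabilityMeasure P] (hQ : Q ∈ riskEnvelope P 1) :
    Q =ᵐ[P] 1 := by
  have hQi := integrable_of_mem_riskEnvelope hQ
  have hgap : ∫ ω, (1 - Q ω) ∂P = 0 := by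
    rw [integral_sub (integrable_const 1) hQi, hQ.2.2]
    simp
  filter_upwards [(integral_eq_zero_iff_of_nonneg_ae (hQ.2.1.mono fun _ h => sub_nonneg.2 h.2)
    ((integrable_const 1).sub hQi)).1 hgap] with ω h
  exact (sub_eq_zero.1 h).symm

theorem isMaxOn_of_forall_ae_eq {s : Set (Ω → ℝ)} (h : ∀ Q' ∈ s, Q' =ᵐ[P] Q) :
    IsMaxOn (fun Q => ∫ ω, C ω * Q ω ∂P) s Q :=
  isMaxOn_iff.2 fun Q' hQ' => (integral_congr_ae ((h Q' hQ').mono fun ω h => by simp [h])).le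

theorem exists_isMaxOn_riskEnvelope [IsProbabilityMeasure P] (hC : Integrable C P)
    (hq : q ∈ Icc 0 1) :
    ∃ Q ∈ riskEnvelope P q, IsMaxOn (fun Q => ∫ ω, C ω * Q ω ∂P) (riskEnvelope P q) Q := by
  rcases hq.1.eq_or_lt with rfl | hq₀
  · exact ⟨0, ⟨measurable_const, ae_of_all _ fun _ => by simp, by simp⟩,
      isMaxOn_of_forall_ae_eq fun _ => ae_eq_zero_of_mem_riskEnvelope_zero⟩
  rcases hq.2.eq_or_lt with rfl | hq₁
  · exact ⟨1, ⟨measurable_const, ae_of_all _ fun _ => by simp, by simp⟩,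
      isMaxOn_of_forall_ae_eq fun _ => ae_eq_one_of_mem_riskEnvelope_one⟩
  obtain ⟨C', hC'm, hCC'⟩ := hC.aemeasurable
  have hobj : ∀ Q : Ω → ℝ, ∫ ω, C ω * Q ω ∂P = ∫ ω, C' ω * Q ω ∂P := fun Q =>
    integral_congr_ae (hCC'.mono fun ω h => by simp only [h])
  obtain ⟨t, hlo, hhi⟩ := exists_measureReal_gt_le_le_measureReal_ge (P := P) hC'm hq₀ hq₁
  obtain ⟨Q, hQ, hthr⟩ := exists_mem_riskEnvelope_of_threshold hC'm hlo hhi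
  refine ⟨Q, hQ, ?_⟩
  simpa only [hobj] using isMaxOn_riskEnvelope_of_threshold (hC.congr hCC') hQ (ae_of_all _ hthr)

theorem scvar_eq_of_isMaxOn (hQ : Q ∈ riskEnvelope P q)
    (hmax : IsMaxOn (fun Q => ∫ ω, C ω * Q ω ∂P) (riskEnvelope P q) Q) :
    scvar P C q = ∫ ω, C ω * Q ω ∂P := by
  refine IsGreatest.csSup_eq ⟨⟨Q, hQ.1, hQ.2.1, hQ.2.2, rfl⟩, ?_⟩
  rintro _ ⟨Q', hm, h01, hq', rfl⟩
  exact isMaxOn_iff.1 hmax Q' ⟨hm, h01, hq'⟩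

end RiskEnvelope

/-- The supremum defining `scvar_q[C]` is attained: there is an admissible `Q` whose
objective value equals `scvar_q[C]` and dominates every other admissible `Q'`. -/
theorem scvar_sup_attained {Ω : Type*} [MeasurableSpace Ω] (P : Measure Ω)
    [IsProbabilityMeasure P] (C : Ω → ℝ) (hC : Integrable C P)
    {q : ℝ} (hq : q ∈ Set.Icc (0 : ℝ) 1) :
    ∃ Q : Ω → ℝ, Measurable Q ∧ (∀ᵐ ω ∂P, 0 ≤ Q ω ∧ Q ω ≤ 1) ∧ (∫ ω, Q ω ∂P) = q ∧
      (∫ ω, C ω * Q ω ∂P) = scvar P C q ∧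
      ∀ Q' : Ω → ℝ, Measurable Q' → (∀ᵐ ω ∂P, 0 ≤ Q' ω ∧ Q' ω ≤ 1) → (∫ ω, Q' ω ∂P) = q →
        (∫ ω, C ω * Q' ω ∂P) ≤ ∫ ω, C ω * Q ω ∂P := by
  obtain ⟨Q, hQ, hmax⟩ := exists_isMaxOn_riskEnvelope hC hq
  exact ⟨Q, hQ.1, hQ.2.1, hQ.2.2, (scvar_eq_of_isMaxOn hQ hmax).symm,
    fun Q' hm h01 hq' => isMaxOn_iff.1 hmax Q' ⟨hm, h01, hq'⟩⟩
end

section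
/- Let C be a real random variable on a probability space whose law is the Gaussian measure with mean μ ∈ ℝ and variance σ² with σ > 0. Let q ∈ (0,1) and let z ∈ ℝ satisfy Φ(z) = 1 − q, where Φ is the cumulative distribution function of the standard Gaussian measure. Then scvar_q[C] = q·μ + σ·φ_pdf(z), where φ_pdf is the density of the standard Gaussian measure; equivalently, cvar_q[C] = μ + σ·φ_pdf(z)/q. -/
open MeasureTheory ProbabilityTheory

/-!
The supremum defining `scvar` is attained by the threshold test `Q₀ = 1_{C > c}` whenever
`P(C > c) = q` (the "bathtub" principle): for any admissible `Q`, `(C - c)(Q₀ - Q) ≥ 0`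
pointwise, and integrating gives `E[C Q] ≤ E[C Q₀]` because `E[Q] = E[Q₀]`.
For `C = σ X + μ` with `X` standard Gaussian, the threshold is `c = σ z + μ`, and
`E[X; X > z] = φ(z)` since `-φ` is a primitive of `x φ(x)`.
-/

open Real Set Filter Topology

section Bathtub

variable {Ω : Type*} [MeasurableSpace Ω] {P : Measure Ω} [IsFiniteMeasure P] {C Q : Ω → ℝ}

lemma integral_mul_le_setIntegral_Ioi_of_integral_eq (hC : Integrable C P) (hCm : Measurable C)
    (hQm : AEStronglyMeasurable Q P) (hQ : ∀ᵐ ω ∂P, 0 ≤ Q ω ∧ Q ω ≤ 1) {c : ℝ}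
    (hQint : ∫ ω, Q ω ∂P = P.real (C ⁻¹' Ioi c)) :
    ∫ ω, C ω * Q ω ∂P ≤ ∫ ω in C ⁻¹' Ioi c, C ω ∂P := by
  set s := C ⁻¹' Ioi c
  have hs : MeasurableSet s := hCm measurableSet_Ioi
  have hQnorm : ∀ᵐ ω ∂P, ‖Q ω‖ ≤ 1 :=
    hQ.mono fun ω h => by rw [norm_of_nonneg h.1]; exact h.2
  have hQi : Integrable Q P := (integrable_const (1 : ℝ)).mono' hQm hQnorm
  have hQ₀i : Integrable (s.indicator 1) P := (integrable_const (1 : ℝ)).indicator hs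
  have hdiff : Integrable (fun ω => c * (Q ω - s.indicator 1 ω)) P :=
    (hQi.sub hQ₀i).const_mul c
  have hpointwise :
      ∀ᵐ ω ∂P, C ω * Q ω ≤ s.indicator C ω + c * (Q ω - s.indicator 1 ω) := by
    filter_upwards [hQ] with ω ⟨hQ0, hQ1⟩
    by_cases h : c < C ω
    · simp only [s, indicator_of_mem (show ω ∈ C ⁻¹' Ioi c from h), Pi.one_apply]
      nlinarith
    · simp only [s, indicator_of_notMem (show ω ∉ C ⁻¹' Ioi c from h)]
      nlinarith
  calc ∫ ω, C ω * Q ω ∂P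
      ≤ ∫ ω, s.indicator C ω + c * (Q ω - s.indicator 1 ω) ∂P :=
        integral_mono_ae (hC.mul_bdd hQm hQnorm) ((hC.indicator hs).add hdiff) hpointwise
    _ = ∫ ω in s, C ω ∂P := by
        rw [integral_add (hC.indicator hs) hdiff, integral_const_mul,
          integral_sub hQi hQ₀i, integral_indicator_one hs, hQint, integral_indicator hs]
        ring

theorem scvar_eq_setIntegral_Ioi (hC : Integrable C P) (hCm : Measurable C) {c q : ℝ}
    (hq : P.real (C ⁻¹' Ioi c) = q) :
    scvar P C q = ∫ ω in C ⁻¹' Ioi c, C ω ∂P := by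
  have hs : MeasurableSet (C ⁻¹' Ioi c) := hCm measurableSet_Ioi
  refine IsGreatest.csSup_eq ⟨⟨(C ⁻¹' Ioi c).indicator 1, measurable_const.indicator hs,
    ae_of_all _ fun ω => ?_, by rw [integral_indicator_one hs, hq], ?_⟩, ?_⟩
  · by_cases h : ω ∈ C ⁻¹' Ioi c <;> simp [h]
  · rw [← integral_indicator hs]
    congr 1 with ω
    by_cases h : ω ∈ C ⁻¹' Ioi c <;> simp [h]
  · rintro y ⟨Q, hQm, hQ, hQint, rfl⟩
    exact integral_mul_le_setIntegral_Ioi_of_integral_eq hC hCm hQm.aestronglyMeasurable hQ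
      (hQint.trans hq.symm)

end Bathtub

lemma gaussianPDFReal_zero_one (x : ℝ) :
    gaussianPDFReal 0 1 x = (√(2 * π))⁻¹ * exp (-x ^ 2 / 2) := by
  simp [gaussianPDFReal]

lemma hasDerivAt_neg_gaussianPDFReal_zero_one (x : ℝ) :
    HasDerivAt (fun y => -gaussianPDFReal 0 1 y) (x * gaussianPDFReal 0 1 x) x := by
  have hexp : HasDerivAt (fun y : ℝ => exp (-y ^ 2 / 2)) (exp (-x ^ 2 / 2) * (-x)) x :=
    (((hasDerivAt_pow 2 x).neg.div_const 2).congr_deriv (by ring)).exp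
  simp only [gaussianPDFReal_zero_one]
  exact (hexp.const_mul _).neg.congr_deriv (by ring)

lemma integrable_mul_gaussianPDFReal_zero_one :
    Integrable (fun x => x * gaussianPDFReal 0 1 x) := by
  refine ((integrable_mul_exp_neg_mul_sq (b := 1 / 2) (by norm_num)).const_mul
    (√(2 * π))⁻¹).congr (ae_of_all _ fun x => ?_)
  simp only [gaussianPDFReal_zero_one]
  ring_nf

lemma tendsto_gaussianPDFReal_zero_one_atTop : Tendsto (gaussianPDFReal 0 1) atTop (𝓝 0) := by
  have h : Tendsto (fun x : ℝ => -x ^ 2 / 2) atTop atBot :=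
    (tendsto_neg_atBot_iff.mpr (tendsto_pow_atTop two_ne_zero)).atBot_div_const two_pos
  have hlim := (tendsto_exp_atBot.comp h).const_mul (√(2 * π))⁻¹
  rw [mul_zero] at hlim
  exact hlim.congr fun x => (gaussianPDFReal_zero_one x).symm

lemma setIntegral_Ioi_mul_gaussianPDFReal_zero_one (z : ℝ) :
    ∫ x in Ioi z, x * gaussianPDFReal 0 1 x = gaussianPDFReal 0 1 z := by
  simpa using integral_Ioi_of_hasDerivAt_of_tendsto'
    (fun x _ => hasDerivAt_neg_gaussianPDFReal_zero_one x)
    integrable_mul_gaussianPDFReal_zero_one.integrableOn tendsto_gaussianPDFReal_zero_one_atTop.neg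

lemma setIntegral_Ioi_id_gaussianReal_zero_one (z : ℝ) :
    ∫ x in Ioi z, x ∂gaussianReal 0 1 = gaussianPDFReal 0 1 z := by
  rw [← integral_indicator measurableSet_Ioi, integral_gaussianReal_eq_integral_smul one_ne_zero,
    ← setIntegral_Ioi_mul_gaussianPDFReal_zero_one, ← integral_indicator measurableSet_Ioi]
  congr 1 with x
  by_cases h : x ∈ Ioi z <;> simp [h, mul_comm]

lemma gaussianReal_zero_one_map_mul_add (σ μ : ℝ) :
    (gaussianReal 0 1).map (fun x => σ * x + μ) = gaussianReal μ (σ ^ 2).toNNReal := by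
  rw [show (fun x : ℝ => σ * x + μ) = (· + μ) ∘ (σ * ·) from rfl,
    ← Measure.map_map (measurable_add_const μ) (measurable_const_mul σ),
    gaussianReal_map_const_mul, gaussianReal_map_add_const]
  congr 1
  · ring
  · ext
    simp [Real.coe_toNNReal _ (sq_nonneg σ)]

section AffineGaussian

variable {μ σ : ℝ}

lemma preimage_mul_add_Ioi_mul_add (hσ : 0 < σ) (z : ℝ) :
    (fun x => σ * x + μ) ⁻¹' Ioi (σ * z + μ) = Ioi z := by
  ext x
  simp [mul_lt_mul_iff_right₀ hσ]

lemma measureReal_gaussianReal_Ioi_mul_add (hσ : 0 < σ) (z : ℝ) :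
    (gaussianReal μ (σ ^ 2).toNNReal).real (Ioi (σ * z + μ))
      = (gaussianReal 0 1).real (Ioi z) := by
  rw [← gaussianReal_zero_one_map_mul_add, map_measureReal_apply (by fun_prop) measurableSet_Ioi,
    preimage_mul_add_Ioi_mul_add hσ]

lemma setIntegral_Ioi_gaussianReal_mul_add (hσ : 0 < σ) (z : ℝ) :
    ∫ x in Ioi (σ * z + μ), x ∂gaussianReal μ (σ ^ 2).toNNReal
      = μ * (gaussianReal 0 1).real (Ioi z) + σ * gaussianPDFReal 0 1 z := by
  have hX : Integrable (fun x : ℝ => x) (gaussianReal 0 1) :=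
    (memLp_id_gaussianReal 1).integrable le_rfl
  rw [← gaussianReal_zero_one_map_mul_add,
    setIntegral_map (f := fun x : ℝ => x) measurableSet_Ioi aestronglyMeasurable_id
      (by fun_prop : AEMeasurable (fun x : ℝ => σ * x + μ) _),
    preimage_mul_add_Ioi_mul_add hσ,
    integral_add (hX.const_mul σ).integrableOn (integrable_const μ),
    integral_const_mul, setIntegral_Ioi_id_gaussianReal_zero_one, setIntegral_const, smul_eq_mul]
  ring

end AffineGaussian

/-- If `C` is Gaussian with mean `μ` and variance `σ²`, `q ∈ (0,1)` and `Φ(z) = 1 − q`,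
then `scvar_q[C] = q·μ + σ·φ_pdf(z)`; equivalently `cvar_q[C] = μ + σ·φ_pdf(z)/q`. -/
theorem scvar_gaussian {Ω : Type*} [MeasurableSpace Ω] (P : Measure Ω)
    [IsProbabilityMeasure P] (C : Ω → ℝ) (hC : Integrable C P) (hCm : Measurable C)
    (μ σ : ℝ) (hσ : 0 < σ)
    (hlaw : P.map C = gaussianReal μ (Real.toNNReal (σ ^ 2)))
    {q : ℝ} (hq : q ∈ Set.Ioo (0 : ℝ) 1) {z : ℝ}
    (hz : gaussianReal 0 1 (Set.Iic z) = ENNReal.ofReal (1 - q)) :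
    scvar P C q = q * μ + σ * gaussianPDFReal 0 1 z ∧
    scvar P C q / q = μ + σ * gaussianPDFReal 0 1 z / q := by
  obtain ⟨hq0, hq1⟩ := hq
  have htail : (gaussianReal 0 1).real (Ioi z) = q := by
    rw [← compl_Iic, probReal_compl_eq_one_sub measurableSet_Iic, measureReal_def, hz,
      ENNReal.toReal_ofReal (by linarith)]
    ring
  have hprob : P.real (C ⁻¹' Ioi (σ * z + μ)) = q := by
    rw [← map_measureReal_apply hCm measurableSet_Ioi, hlaw,
      measureReal_gaussianReal_Ioi_mul_add hσ, htail]
  have hmean :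
      ∫ ω in C ⁻¹' Ioi (σ * z + μ), C ω ∂P = q * μ + σ * gaussianPDFReal 0 1 z := by
    rw [← setIntegral_map (f := fun x : ℝ => x) measurableSet_Ioi aestronglyMeasurable_id
        hCm.aemeasurable, hlaw, setIntegral_Ioi_gaussianReal_mul_add hσ, htail]
    ring
  have hscvar := (scvar_eq_setIntegral_Ioi hC hCm hprob).trans hmean
  refine ⟨hscvar, ?_⟩
  rw [hscvar]
  field_simp
end

section
/- Let a, b > 0 and x ∈ ℝ. For every continuously differentiable function f : [0,∞) → ℝ with f(0) = x, f(t) → 0 as t → ∞, and with ∫₀^∞ f'(t)² dt < ∞ and ∫₀^∞ f(t)² dt < ∞, one has ∫₀^∞ ( a·f'(t)² + b·f(t)² ) dt ≥ √(a·b) · x². Moreover, equality holds for the exponential schedule f(t) = x·exp(−t/ρ) with ρ = √(a/b), for which ∫₀^∞ a·f'(t)² dt = ∫₀^∞ b·f(t)² dt = √(a·b)·x²/2. -/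
open MeasureTheory Filter Set Real Topology

/-!
Since `(f²)' = 2 f f'` and `f → 0`, the integral of `2 f f'` over `[0, ∞)` is `-x²`. Pointwise
AM-GM gives `a f'² + b f² ≥ -2√(ab) f f'`, hence the lower bound `√(ab) x²`. The exponential
schedule solves `√a f' = -√b f`, which is exactly the equality case of AM-GM.
-/

lemma neg_sqrt_mul_mul_two_mul_le {a b : ℝ} (ha : 0 ≤ a) (hb : 0 ≤ b) (u v : ℝ) :
    -(√(a * b) * (2 * u * v)) ≤ a * v ^ 2 + b * u ^ 2 := by
  rw [sqrt_mul ha]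
  nlinarith [sq_nonneg (√a * v + √b * u), sq_sqrt ha, sq_sqrt hb]

lemma integrable_mul_of_integrable_sq {α : Type*} [MeasurableSpace α] {μ : Measure α}
    {f g : α → ℝ} (hf : AEStronglyMeasurable f μ) (hg : AEStronglyMeasurable g μ)
    (hf2 : Integrable (fun x => f x ^ 2) μ) (hg2 : Integrable (fun x => g x ^ 2) μ) :
    Integrable (f * g) μ :=
  ((memLp_two_iff_integrable_sq hf).2 hf2).integrable_mul ((memLp_two_iff_integrable_sq hg).2 hg2)

section SquareIntegrable

variable {f f' : ℝ → ℝ} {c : ℝ}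

lemma integrableOn_Ici_two_mul_mul_deriv
    (hf : ∀ t ∈ Ici c, HasDerivWithinAt f (f' t) (Ici c) t) (hf' : ContinuousOn f' (Ici c))
    (hf2 : IntegrableOn (fun t => f t ^ 2) (Ici c))
    (hf'2 : IntegrableOn (fun t => f' t ^ 2) (Ici c)) :
    IntegrableOn (fun t => 2 * f t * f' t) (Ici c) := by
  have hfc : ContinuousOn f (Ici c) := fun t ht => (hf t ht).continuousWithinAt
  have hprod : IntegrableOn (f * f') (Ici c) :=
    integrable_mul_of_integrable_sq (hfc.aestronglyMeasurable measurableSet_Ici)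
      (hf'.aestronglyMeasurable measurableSet_Ici) hf2 hf'2
  simpa only [IntegrableOn, Pi.mul_apply, mul_assoc] using hprod.const_mul 2

theorem integral_Ici_two_mul_mul_deriv (hf : ∀ t ∈ Ici c, HasDerivWithinAt f (f' t) (Ici c) t)
    (hf' : ContinuousOn f' (Ici c)) (hlim : Tendsto f atTop (𝓝 0))
    (hf2 : IntegrableOn (fun t => f t ^ 2) (Ici c))
    (hf'2 : IntegrableOn (fun t => f' t ^ 2) (Ici c)) :
    ∫ t in Ici c, 2 * f t * f' t = -f c ^ 2 := by
  have hderiv : ∀ t ∈ Ioi c, HasDerivAt (fun s => f s ^ 2) (2 * f t * f' t) t := fun t ht => by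
    simpa [mul_comm, mul_assoc] using
      (((hf t (Ioi_subset_Ici_self ht)).hasDerivAt (Ici_mem_nhds ht)).fun_pow 2)
  have hint := (integrableOn_Ici_two_mul_mul_deriv hf hf' hf2 hf'2).mono_set Ioi_subset_Ici_self
  rw [integral_Ici_eq_integral_Ioi, integral_Ioi_of_hasDerivAt_of_tendsto (f := fun s => f s ^ 2)
    ((hf c self_mem_Ici).continuousWithinAt.pow 2) hderiv hint (hlim.pow 2),
    zero_pow two_ne_zero, zero_sub]

theorem sqrt_mul_mul_sq_le_integral_Ici {a b : ℝ} (ha : 0 ≤ a) (hb : 0 ≤ b)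
    (hf : ∀ t ∈ Ici c, HasDerivWithinAt f (f' t) (Ici c) t)
    (hf' : ContinuousOn f' (Ici c)) (hlim : Tendsto f atTop (𝓝 0))
    (hf2 : IntegrableOn (fun t => f t ^ 2) (Ici c))
    (hf'2 : IntegrableOn (fun t => f' t ^ 2) (Ici c)) :
    √(a * b) * f c ^ 2 ≤ ∫ t in Ici c, (a * f' t ^ 2 + b * f t ^ 2) :=
  calc √(a * b) * f c ^ 2 = ∫ t in Ici c, -(√(a * b) * (2 * f t * f' t)) := by
        rw [integral_neg, integral_const_mul, integral_Ici_two_mul_mul_deriv hf hf' hlim hf2 hf'2]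
        ring
    _ ≤ ∫ t in Ici c, (a * f' t ^ 2 + b * f t ^ 2) :=
        integral_mono ((integrableOn_Ici_two_mul_mul_deriv hf hf' hf2 hf'2).const_mul _).neg
          ((hf'2.const_mul a).add (hf2.const_mul b))
          fun t => neg_sqrt_mul_mul_two_mul_le ha hb (f t) (f' t)

end SquareIntegrable

lemma div_sqrt_div_eq_sqrt_mul {a b : ℝ} (ha : 0 ≤ a) : a / √(a / b) = √(a * b) := by
  rw [sqrt_div ha, sqrt_mul ha, div_div_eq_mul_div, mul_comm, mul_div_assoc, div_sqrt, mul_comm]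

lemma mul_sqrt_div_eq_sqrt_mul {a b : ℝ} (ha : 0 ≤ a) : b * √(a / b) = √(a * b) := by
  rw [sqrt_div ha, sqrt_mul ha, mul_div_left_comm, div_sqrt, mul_comm]

lemma hasDerivAt_mul_exp_neg_div (x ρ t : ℝ) :
    HasDerivAt (fun s => x * exp (-s / ρ)) (-(x / ρ) * exp (-t / ρ)) t := by
  have h : HasDerivAt (fun s => -s / ρ) (-1 / ρ) t := (hasDerivAt_neg t).div_const ρ
  exact (h.exp.const_mul x).congr_deriv (by ring)

lemma integral_Ici_exp_neg_div_sq {ρ : ℝ} (hρ : 0 < ρ) :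
    ∫ t in Ici 0, exp (-t / ρ) ^ 2 = ρ / 2 := by
  have hsq : ∀ t, exp (-t / ρ) ^ 2 = exp (-(2 / ρ) * t) := fun t => by
    rw [← exp_nat_mul]
    congr 1
    push_cast
    ring
  simp_rw [hsq]
  rw [integral_Ici_eq_integral_Ioi, integral_exp_mul_Ioi (by simpa using hρ) 0]
  field_simp
  simp

/-- Calculus-of-variations core of the optimal deterministic liquidation schedule:
for every C¹ trajectory `f` on `[0,∞)` with `f(0) = x`, `f(t) → 0` and square-integrable
`f`, `f'`, one has `∫₀^∞ (a f'² + b f²) ≥ √(ab) x²`; equality holds for the exponential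
schedule `f(t) = x e^{−t/ρ}` with `ρ = √(a/b)`, each of whose two cost terms integrates
to `√(ab) x²/2`. -/
theorem exponential_schedule_optimal (a b x : ℝ) (ha : 0 < a) (hb : 0 < b) :
    (∀ f f' : ℝ → ℝ,
      (∀ t ∈ Set.Ici (0 : ℝ), HasDerivWithinAt f (f' t) (Set.Ici (0 : ℝ)) t) →
      ContinuousOn f' (Set.Ici (0 : ℝ)) →
      f 0 = x →
      Tendsto f atTop (nhds 0) →
      IntegrableOn (fun t => (f' t) ^ 2) (Set.Ici (0 : ℝ)) →
      IntegrableOn (fun t => (f t) ^ 2) (Set.Ici (0 : ℝ)) →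
      Real.sqrt (a * b) * x ^ 2 ≤ ∫ t in Set.Ici (0 : ℝ), (a * (f' t) ^ 2 + b * (f t) ^ 2)) ∧
    ((∀ t : ℝ, HasDerivAt (fun s => x * Real.exp (-s / Real.sqrt (a / b)))
        (-(x / Real.sqrt (a / b)) * Real.exp (-t / Real.sqrt (a / b))) t) ∧
      (∫ t in Set.Ici (0 : ℝ), a * (-(x / Real.sqrt (a / b)) * Real.exp (-t / Real.sqrt (a / b))) ^ 2)
        = Real.sqrt (a * b) * x ^ 2 / 2 ∧
      (∫ t in Set.Ici (0 : ℝ), b * (x * Real.exp (-t / Real.sqrt (a / b))) ^ 2)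
        = Real.sqrt (a * b) * x ^ 2 / 2) := by
  refine ⟨fun f f' hf hf' hf0 hlim hf'2 hf2 => hf0 ▸
    sqrt_mul_mul_sq_le_integral_Ici ha.le hb.le hf hf' hlim hf2 hf'2,
    hasDerivAt_mul_exp_neg_div x _, ?_, ?_⟩
  all_goals
    set ρ := √(a / b)
    have hρ : 0 < ρ := sqrt_pos.2 (div_pos ha hb)
  · calc ∫ t in Ici 0, a * (-(x / ρ) * exp (-t / ρ)) ^ 2
        = a / ρ * x ^ 2 / ρ * ∫ t in Ici 0, exp (-t / ρ) ^ 2 := by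
          rw [← integral_const_mul]
          congr 1 with t
          field_simp
      _ = √(a * b) * x ^ 2 / 2 := by
          rw [integral_Ici_exp_neg_div_sq hρ, div_sqrt_div_eq_sqrt_mul ha.le]
          field_simp
  · calc ∫ t in Ici 0, b * (x * exp (-t / ρ)) ^ 2
        = b * x ^ 2 * ∫ t in Ici 0, exp (-t / ρ) ^ 2 := by
          rw [← integral_const_mul]
          congr 1 with t
          ring
      _ = √(a * b) * x ^ 2 / 2 := by
          rw [integral_Ici_exp_neg_div_sq hρ, ← mul_sqrt_div_eq_sqrt_mul ha.le]
          ring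
end

section
/- Let σ, η, x, q, κ > 0. Then the infimum over T > 0 of q·η·x²/(2T) + κ·σ·x·√(T/3) equals (3^{2/3}/2) · σ^{2/3} · η^{1/3} · x^{4/3} · q^{1/3} · κ^{2/3}, and it is attained at T* = ( √3·η·x·q / (σ·κ) )^{2/3}. Consequently this optimal VWAP value exceeds the optimal exponential-schedule value (3/2^{5/3})·σ^{2/3}·η^{1/3}·x^{4/3}·q^{1/3}·κ^{2/3} by the constant factor (4/3)^{1/3}, independent of q. -/
/-!
Writing `a = qηx²/2` and `b = κσx/√3`, the cost is `a/T + b√T`. If `s > 0` is the cube root with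
`b s³ = 2a`, then for `T = v²` the excess of the cost over `3bs/2` is `b (v - s)² (2v + s) / (2v²) ≥ 0`,
with equality exactly at `T = s²`. The closed forms of `3bs/2` and of the constant ratio are
identities between positive reals, checked after cubing both sides.
-/

open Real

lemma rpow_div_three_pow_three {a : ℝ} (ha : 0 ≤ a) (k : ℝ) : (a ^ (k / 3)) ^ 3 = a ^ k := by
  rw [← rpow_natCast, ← rpow_mul ha]
  norm_num

lemma three_mul_mul_sq_le_pow_three_add_two_mul_pow_three {u v : ℝ} (hu : 0 ≤ u) (hv : 0 ≤ v) :
    3 * u * v ^ 2 ≤ u ^ 3 + 2 * v ^ 3 := by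
  nlinarith [mul_nonneg (sq_nonneg (v - u)) (by positivity : 0 ≤ 2 * v + u)]

section DivAddMulSqrt

variable {a b s : ℝ}

lemma div_sq_add_mul_sqrt_sq (hs : 0 < s) (hbs : b * s ^ 3 = 2 * a) :
    a / s ^ 2 + b * √(s ^ 2) = 3 / 2 * b * s := by
  obtain rfl : a = b * s ^ 3 / 2 := by linarith
  rw [sqrt_sq hs.le]
  field_simp
  ring

lemma isLeast_div_add_mul_sqrt (hb : 0 < b) (hs : 0 < s) (hbs : b * s ^ 3 = 2 * a) :
    IsLeast {y | ∃ T, 0 < T ∧ y = a / T + b * √T} (3 / 2 * b * s) := by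
  refine ⟨⟨s ^ 2, by positivity, (div_sq_add_mul_sqrt_sq hs hbs).symm⟩, ?_⟩
  rintro _ ⟨T, hT, rfl⟩
  obtain ⟨v, hv, rfl⟩ : ∃ v, 0 < v ∧ T = v ^ 2 := ⟨√T, sqrt_pos.mpr hT, (sq_sqrt hT.le).symm⟩
  have amgm := three_mul_mul_sq_le_pow_three_add_two_mul_pow_three hs.le hv.le
  rw [sqrt_sq hv.le, div_add' _ _ _ (by positivity), le_div_iff₀ (by positivity)]
  nlinarith [mul_le_mul_of_nonneg_left amgm hb.le]

end DivAddMulSqrt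

lemma three_rpow_two_div_three_div_two_eq :
    (3 : ℝ) ^ ((2 : ℝ) / 3) / 2 = (4 / 3 : ℝ) ^ ((1 : ℝ) / 3) * (3 / (2 : ℝ) ^ ((5 : ℝ) / 3)) := by
  refine (pow_left_inj₀ (by positivity) (by positivity) three_ne_zero).mp ?_
  simp only [div_pow, mul_pow, rpow_div_three_pow_three (by norm_num : (0 : ℝ) ≤ 3),
    rpow_div_three_pow_three (by norm_num : (0 : ℝ) ≤ 2),
    rpow_div_three_pow_three (by norm_num : (0 : ℝ) ≤ 4 / 3)]
  norm_num

lemma vwap_optimal_value_eq {σ η x q κ : ℝ}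
    (hσ : 0 < σ) (hη : 0 < η) (hx : 0 < x) (hq : 0 < q) (hκ : 0 < κ) :
    3 / 2 * (κ * σ * x / √3) * (√3 * η * x * q / (σ * κ)) ^ ((1 : ℝ) / 3)
      = ((3 : ℝ) ^ ((2 : ℝ) / 3) / 2) * σ ^ ((2 : ℝ) / 3) * η ^ ((1 : ℝ) / 3)
        * x ^ ((4 : ℝ) / 3) * q ^ ((1 : ℝ) / 3) * κ ^ ((2 : ℝ) / 3) := by
  refine (pow_left_inj₀ (by positivity) (by positivity) three_ne_zero).mp ?_
  simp only [div_pow, mul_pow, rpow_div_three_pow_three (by norm_num : (0 : ℝ) ≤ 3),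
    rpow_div_three_pow_three hσ.le, rpow_div_three_pow_three hη.le,
    rpow_div_three_pow_three hx.le, rpow_div_three_pow_three hq.le,
    rpow_div_three_pow_three hκ.le,
    rpow_div_three_pow_three (by positivity : 0 ≤ √3 * η * x * q / (σ * κ))]
  have sqrt_three_pow_three : √3 ^ 3 = 3 * √3 := by rw [pow_succ, sq_sqrt (by norm_num)]
  norm_num [sqrt_three_pow_three]
  field_simp
  ring

/-- The optimized VWAP schedule: the infimum over horizons `T > 0` of the CVaR cost
`qηx²/(2T) + κσx√(T/3)` equals `(3^{2/3}/2) σ^{2/3} η^{1/3} x^{4/3} q^{1/3} κ^{2/3}`,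
attained at `T* = (√3 ηxq/(σκ))^{2/3}`; this exceeds the optimal exponential-schedule
value `(3/2^{5/3}) σ^{2/3} η^{1/3} x^{4/3} q^{1/3} κ^{2/3}` by the factor `(4/3)^{1/3}`. -/
theorem optimal_vwap_schedule (σ η x q κ : ℝ)
    (hσ : 0 < σ) (hη : 0 < η) (hx : 0 < x) (hq : 0 < q) (hκ : 0 < κ) :
    IsLeast {y : ℝ | ∃ T : ℝ, 0 < T ∧ y = q * η * x ^ 2 / (2 * T) + κ * σ * x * Real.sqrt (T / 3)}
      (((3 : ℝ) ^ ((2 : ℝ) / 3) / 2) * σ ^ ((2 : ℝ) / 3) * η ^ ((1 : ℝ) / 3)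
        * x ^ ((4 : ℝ) / 3) * q ^ ((1 : ℝ) / 3) * κ ^ ((2 : ℝ) / 3)) ∧
    (q * η * x ^ 2 / (2 * ((Real.sqrt 3 * η * x * q / (σ * κ)) ^ ((2 : ℝ) / 3)))
        + κ * σ * x * Real.sqrt (((Real.sqrt 3 * η * x * q / (σ * κ)) ^ ((2 : ℝ) / 3)) / 3)
      = ((3 : ℝ) ^ ((2 : ℝ) / 3) / 2) * σ ^ ((2 : ℝ) / 3) * η ^ ((1 : ℝ) / 3)
        * x ^ ((4 : ℝ) / 3) * q ^ ((1 : ℝ) / 3) * κ ^ ((2 : ℝ) / 3)) ∧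
    (((3 : ℝ) ^ ((2 : ℝ) / 3) / 2) * σ ^ ((2 : ℝ) / 3) * η ^ ((1 : ℝ) / 3)
        * x ^ ((4 : ℝ) / 3) * q ^ ((1 : ℝ) / 3) * κ ^ ((2 : ℝ) / 3)
      = ((4 / 3 : ℝ) ^ ((1 : ℝ) / 3))
        * ((3 / (2 : ℝ) ^ ((5 : ℝ) / 3)) * σ ^ ((2 : ℝ) / 3) * η ^ ((1 : ℝ) / 3)
          * x ^ ((4 : ℝ) / 3) * q ^ ((1 : ℝ) / 3) * κ ^ ((2 : ℝ) / 3))) := by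
  set r := √3 * η * x * q / (σ * κ)
  have hr : 0 < r := by positivity
  have hs : 0 < r ^ ((1 : ℝ) / 3) := by positivity
  have hs_sq : (r ^ ((1 : ℝ) / 3)) ^ 2 = r ^ ((2 : ℝ) / 3) := by
    rw [← rpow_natCast, ← rpow_mul hr.le]
    norm_num
  have hbs : κ * σ * x / √3 * (r ^ ((1 : ℝ) / 3)) ^ 3 = 2 * (q * η * x ^ 2 / 2) := by
    rw [rpow_div_three_pow_three hr.le, rpow_one]
    simp only [r]
    field_simp
  have hcost (T : ℝ) : q * η * x ^ 2 / (2 * T) + κ * σ * x * √(T / 3)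
      = q * η * x ^ 2 / 2 / T + κ * σ * x / √3 * √T := by
    rw [sqrt_div' _ (by norm_num : (0 : ℝ) ≤ 3)]
    ring
  refine ⟨?_, ?_, ?_⟩
  · simp only [hcost]
    rw [← vwap_optimal_value_eq hσ hη hx hq hκ]
    exact isLeast_div_add_mul_sqrt (by positivity) hs hbs
  · rw [← hs_sq, hcost, div_sq_add_mul_sqrt_sq hs hbs, vwap_optimal_value_eq hσ hη hx hq hκ]
  · rw [three_rpow_two_div_three_div_two_eq]
    ring
end
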